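/- Let p be a prime, G = ⟨σ⟩ cyclic of order p, and M a finite ℤ_p[G]-module with M^ν ≠ 1, #M^G = p, and n the least integer with ker((1-σ)^n) = M. If n = p, then M is isomorphic as an abelian group to either (ℤ/pℤ)^p or ℤ/p²ℤ ⊕ (ℤ/pℤ)^{p-2}. -/

import Mathlib

/-- The endomorphism `1 - σ` of an abelian group `M`, for `σ` an automorphism. -/
def oneSubSigma {M : Type*} [AddCommGroup M] (σ : AddAut M) : AddMonoid.End M :=
  1 - (show AddMonoid.End M from AddEquiv.toAddMonoidHom σ)

/-!
Write `τ = 1 - σ`. For `i < n` the map `τ^i` embeds `ker τ^(i+1) / ker τ^i` into `ker τ`, and the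
inclusion is proper, so every step of the kernel filtration has index exactly `p` and `#M = p^p`.
Expanding `1 = σ^p = (1 - τ)^p` binomially and using `τ^p = 0` gives `p τ (1 + τ w) = 0` with
`1 + τ w` a unit, hence `p τ = 0`: all of `pM` lies in the group `ker τ` of order `p`.
If `pM ≠ 0`, split `M = ℤ/m ⊕ B` with `p` nonzero on `ℤ/m`; then `m = p²`, and `pB = 0` because
the cyclic group `ker τ` is generated by a nonzero element of `p(ℤ/m)`.
-/

open Polynomial

theorem Polynomial.exists_X_add_one_pow_prime_eq {p : ℕ} (hp : p.Prime) :
    ∃ w : ℤ[X], (X + 1) ^ p = X ^ p + 1 + (p : ℤ[X]) * X * (1 + X * w) := by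
  obtain ⟨S, hS⟩ : ∃ S : ℤ[X], (X + 1) ^ p = X ^ p + 1 + (p : ℤ[X]) * X * S :=
    ⟨_, by simpa using add_pow_prime_eq hp (X : ℤ[X]) 1⟩
  have hS0 : S.coeff 0 = 1 := by
    have h := congrArg (coeff · 1) hS
    simp only [coeff_X_add_one_pow, Nat.choose_one_right, coeff_add, coeff_X_pow,
      hp.ne_one.symm, if_false, coeff_one, mul_assoc, coeff_natCast_mul, coeff_X_mul] at h
    simpa [hp.ne_zero] using h
  obtain ⟨w, hw⟩ := X_dvd_sub_C (p := S)
  exact ⟨w, by rw [hS, ← hw, hS0, map_one, add_sub_cancel]⟩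

theorem natCast_mul_eq_zero_of_one_add_pow_eq_one {R : Type*} [Ring R] {p : ℕ} (hp : p.Prime)
    {t : R} (h1 : (1 + t) ^ p = 1) (h0 : t ^ p = 0) : (p : R) * t = 0 := by
  obtain ⟨w, hw⟩ := exists_X_add_one_pow_prime_eq hp
  have hunit : IsUnit (aeval t (1 + X * w)) := by
    rw [map_add, map_one]
    refine IsNilpotent.isUnit_one_add ⟨p, ?_⟩
    rw [← map_pow, mul_pow, map_mul, map_pow, aeval_X, h0, zero_mul]
  have h := congrArg (aeval t) hw
  simp only [map_add, map_mul, map_pow, map_natCast, aeval_X, map_one, add_comm t, h1, h0,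
    zero_add] at h
  rw [← hunit.mul_left_eq_zero, map_add, map_mul, map_one, aeval_X]
  exact left_eq_add.mp h

theorem one_sub_oneSubSigma_pow_apply {M : Type*} [AddCommGroup M] (σ : AddAut M) (k : ℕ)
    (x : M) : ((1 - oneSubSigma σ) ^ k) x = (k • σ) x := by
  induction k generalizing x with
  | zero => rfl
  | succ k ih =>
    rw [pow_succ, AddMonoid.End.coe_mul, Function.comp_apply, ih, oneSubSigma, sub_sub_cancel]
    rfl

theorem natCast_mul_oneSubSigma_eq_zero {M : Type*} [AddCommGroup M] {p : ℕ} (hp : p.Prime)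
    {σ : AddAut M} (hσ : p • σ = 0) (h : oneSubSigma σ ^ p = 0) :
    (p : AddMonoid.End M) * oneSubSigma σ = 0 := by
  have hs : (1 - oneSubSigma σ) ^ p = 1 := by
    ext x
    rw [one_sub_oneSubSigma_pow_apply, hσ]
    rfl
  have := natCast_mul_eq_zero_of_one_add_pow_eq_one hp (t := -oneSubSigma σ)
    (by rwa [← sub_eq_add_neg]) (by rw [neg_pow, h, mul_zero])
  rwa [mul_neg, neg_eq_zero] at this

namespace AddMonoid.End

variable {M : Type*} [AddCommGroup M] (τ : AddMonoid.End M)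

theorem ker_pow_mono : Monotone fun i : ℕ => AddMonoidHom.ker (τ ^ i) := by
  intro i j hij x (hx : (τ ^ i) x = 0)
  change (τ ^ j) x = 0
  rw [← pow_sub_mul_pow τ hij, coe_mul, Function.comp_apply, hx, map_zero]

theorem ker_pow_add_le_of_ker_pow_succ_le {i : ℕ}
    (h : AddMonoidHom.ker (τ ^ (i + 1)) ≤ AddMonoidHom.ker (τ ^ i)) (m : ℕ) :
    AddMonoidHom.ker (τ ^ (i + m)) ≤ AddMonoidHom.ker (τ ^ i) := by
  induction m with
  | zero => rfl
  | succ m ih =>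
    intro x (hx : (τ ^ (i + (m + 1))) x = 0)
    refine ih (?_ : (τ ^ (i + m)) x = 0)
    have : (τ ^ m) x ∈ AddMonoidHom.ker (τ ^ (i + 1)) := by
      change (τ ^ (i + 1) * τ ^ m) x = 0
      rwa [← pow_add, add_right_comm]
    rw [pow_add, coe_mul, Function.comp_apply]
    exact h this

theorem relIndex_ker_pow_dvd_card_ker (i : ℕ) :
    (AddMonoidHom.ker (τ ^ i)).relIndex (AddMonoidHom.ker (τ ^ (i + 1))) ∣
      Nat.card (AddMonoidHom.ker τ) := by
  refine (dvd_of_eq (AddSubgroup.relIndex_ker _ (τ ^ i))).trans (AddSubgroup.card_dvd_of_le ?_)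
  rintro _ ⟨x, hx, rfl⟩
  change (τ * τ ^ i) x = 0
  rwa [← pow_succ']

theorem card_eq_pow_of_ker_pow_eq_top {p n : ℕ} (hp : p.Prime)
    (h1 : Nat.card (AddMonoidHom.ker τ) = p) (hn : AddMonoidHom.ker (τ ^ n) = ⊤)
    (hmin : ∀ m < n, AddMonoidHom.ker (τ ^ m) ≠ ⊤) : Nat.card M = p ^ n := by
  have hstep : ∀ i < n, Nat.card (AddMonoidHom.ker (τ ^ (i + 1))) =
      Nat.card (AddMonoidHom.ker (τ ^ i)) * p := by
    intro i hi
    have hne : (AddMonoidHom.ker (τ ^ i)).relIndex (AddMonoidHom.ker (τ ^ (i + 1))) ≠ 1 := by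
      rw [Ne, AddSubgroup.relIndex_eq_one]
      intro h
      refine hmin i hi (top_le_iff.mp ?_)
      simpa [← hn, Nat.add_sub_cancel' hi.le] using ker_pow_add_le_of_ker_pow_succ_le τ h (n - i)
    have hindex := ((Nat.dvd_prime hp).mp (h1 ▸ relIndex_ker_pow_dvd_card_ker τ i)).resolve_left hne
    have hmul := AddSubgroup.relIndex_mul_relIndex _ _ _ bot_le (ker_pow_mono τ i.le_succ)
    simp only [AddSubgroup.relIndex_bot_left, hindex] at hmul
    exact hmul.symm
  have hcard : ∀ i ≤ n, Nat.card (AddMonoidHom.ker (τ ^ i)) = p ^ i := by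
    intro i hi
    induction i with
    | zero =>
      exact AddSubgroup.card_eq_one.mpr ((AddSubgroup.eq_bot_iff_forall _).mpr fun _ h => h)
    | succ i ih => rw [hstep i hi, ih (by omega), pow_succ]
  rw [← hcard n le_rfl, hn, AddSubgroup.card_top]

end AddMonoid.End

theorem nonempty_addEquiv_fin_zmod_of_nsmul_eq_zero {A : Type*} [AddCommGroup A] [Finite A]
    {p d : ℕ} [Fact p.Prime] (hcard : Nat.card A = p ^ d) (hA : ∀ x : A, p • x = 0) :
    Nonempty (A ≃+ (Fin d → ZMod p)) := by
  have : Module (ZMod p) A := AddCommGroup.zmodModule hA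
  have : Module.Finite (ZMod p) A := .of_finite
  have hd : Module.finrank (ZMod p) A = d := by
    apply Nat.pow_right_injective (Fact.out : p.Prime).two_le
    dsimp only
    rw [← hcard, Module.natCard_eq_pow_finrank (K := ZMod p), Nat.card_zmod]
  exact ⟨(LinearEquiv.ofFinrankEq A (Fin d → ZMod p)
    (by rw [hd, Module.finrank_fin_fun])).toAddEquiv⟩

theorem exists_addEquiv_zmod_prod_of_nsmul_ne_zero {M : Type*} [AddCommGroup M] [Finite M]
    {k : ℕ} {x : M} (hx : k • x ≠ 0) :
    ∃ (m : ℕ) (B : Type) (_ : AddCommGroup B) (e : M ≃+ ZMod m × B), k • (e x).1 ≠ 0 := by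
  classical
  obtain ⟨ι, _, p, -, n, ⟨e⟩⟩ := AddCommGroup.equiv_directSum_zmod_of_finite M
  let f : M ≃+ Π i, ZMod (p i ^ n i) :=
    e.trans (DirectSum.linearEquivFunOnFintype ℤ ι _).toAddEquiv
  obtain ⟨i, hi⟩ : ∃ i, k • f x i ≠ 0 := by
    by_contra! h
    exact hx (f.injective (by ext i; simpa using h i))
  exact ⟨_, _, _, f.trans (AddEquiv.mk' (Equiv.piSplitAt i _) fun _ _ => rfl), hi⟩

theorem ZMod.eq_prime_sq_of_nsmul_ne_zero {p m : ℕ} [Fact p.Prime]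
    (hsq : ∀ c : ZMod m, p ^ 2 • c = 0) {a : ZMod m} (ha : p • a ≠ 0) : m = p ^ 2 := by
  apply Nat.dvd_antisymm
  · rw [← ZMod.addOrderOf_one m]
    exact addOrderOf_dvd_of_nsmul_eq_zero (hsq 1)
  · rw [← addOrderOf_eq_prime_pow (n := 1) (by rwa [pow_one]) (hsq a)]
    exact addOrderOf_dvd_of_nsmul_eq_zero (by rw [nsmul_eq_mul, ZMod.natCast_self, zero_mul])

theorem Prod.nsmul_eq_zero_of_forall_nsmul_mem {A B : Type*} [AddCommGroup A] [AddCommGroup B]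
    {p : ℕ} [Fact p.Prime] {H : AddSubgroup (A × B)} (hH : Nat.card H = p)
    (hpH : ∀ x, p • x ∈ H) {a : A} (ha : p • a ≠ 0) (b : B) : p • b = 0 := by
  have hgen : AddSubgroup.zmultiples (⟨p • (a, 0), hpH _⟩ : H) = ⊤ :=
    zmultiples_eq_top_of_prime_card hH (by simpa [Subtype.ext_iff] using ha)
  obtain ⟨k, hk⟩ := AddSubgroup.mem_zmultiples_iff.mp (hgen ▸ AddSubgroup.mem_top
    (⟨p • ((0 : A), b), hpH _⟩ : H))
  simpa using (congrArg (fun y : H => (y : A × B).2) hk).symm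

theorem nonempty_addEquiv_of_forall_nsmul_mem {M : Type*} [AddCommGroup M] [Finite M]
    {p k : ℕ} [Fact p.Prime] (hcard : Nat.card M = p ^ k) {H : AddSubgroup M}
    (hH : Nat.card H = p) (hpH : ∀ x, p • x ∈ H) :
    Nonempty (M ≃+ (Fin k → ZMod p)) ∨
      Nonempty (M ≃+ (ZMod (p ^ 2) × (Fin (k - 2) → ZMod p))) := by
  by_cases hel : ∀ x : M, p • x = 0
  · exact .inl (nonempty_addEquiv_fin_zmod_of_nsmul_eq_zero hcard hel)
  push Not at hel
  obtain ⟨x, hx⟩ := hel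
  obtain ⟨m, B, _, e, he⟩ := exists_addEquiv_zmod_prod_of_nsmul_ne_zero hx
  have hsq : ∀ c : ZMod m × B, p ^ 2 • c = 0 := fun c => by
    have h := card_nsmul_eq_zero' (x := (⟨_, hpH (e.symm c)⟩ : H))
    rw [hH] at h
    simpa [pow_two, mul_nsmul] using congrArg (e ∘ Subtype.val) h
  have hB : ∀ b : B, p • b = 0 :=
    Prod.nsmul_eq_zero_of_forall_nsmul_mem (H := H.map e.toAddMonoidHom)
      (by rw [AddSubgroup.card_map_of_injective e.injective, hH])
      (fun c => ⟨_, hpH (e.symm c), by simp⟩) he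
  obtain rfl : m = p ^ 2 :=
    ZMod.eq_prime_sq_of_nsmul_ne_zero (fun c => by simpa using congrArg Prod.fst (hsq (c, 0))) he
  have : Finite B := Finite.of_injective (fun b => e.symm (0, b)) fun b b' h => by simpa using h
  have hBcard : Nat.card B = p ^ (k - 2) := by
    have h : p ^ 2 * Nat.card B = p ^ k := by
      rw [← hcard, Nat.card_congr e.toEquiv, Nat.card_prod, Nat.card_zmod]
    have hp : p.Prime := Fact.out
    have hk : 2 ≤ k := (Nat.pow_dvd_pow_iff_le_right hp.one_lt).mp (h ▸ dvd_mul_right _ _)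
    rwa [← Nat.add_sub_cancel' hk, pow_add, Nat.mul_right_inj (pow_ne_zero 2 hp.ne_zero)] at h
  obtain ⟨eB⟩ := nonempty_addEquiv_fin_zmod_of_nsmul_eq_zero hBcard hB
  exact .inr ⟨e.trans (AddEquiv.prodCongr (.refl _) eB)⟩

theorem stmt13_general {M : Type*} [AddCommGroup M] [Finite M] (p : ℕ) (hp : p.Prime)
    (σ : AddAut M) (hσ : p • σ = 0)
    (hM1 : Nat.card (AddMonoidHom.ker (oneSubSigma σ)) = p)
    (n : ℕ) (hn : AddMonoidHom.ker ((oneSubSigma σ) ^ n) = ⊤)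
    (hmin : ∀ m < n, AddMonoidHom.ker ((oneSubSigma σ) ^ m) ≠ ⊤)
    (hnp : n = p) :
    Nonempty (M ≃+ (Fin p → ZMod p)) ∨
      Nonempty (M ≃+ (ZMod (p ^ 2) × (Fin (p - 2) → ZMod p))) := by
  subst n
  have : Fact p.Prime := ⟨hp⟩
  have hcard := (oneSubSigma σ).card_eq_pow_of_ker_pow_eq_top hp hM1 hn hmin
  have hpτ := natCast_mul_oneSubSigma_eq_zero hp hσ (by
    ext x
    exact (hn ▸ AddSubgroup.mem_top x : x ∈ AddMonoidHom.ker _))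
  refine nonempty_addEquiv_of_forall_nsmul_mem hcard hM1 fun x => ?_
  change oneSubSigma σ (p • x) = 0
  rw [map_nsmul]
  simpa using DFunLike.congr_fun hpτ x

/-- Structure theorem: for `G = ⟨σ⟩` of order `p` acting on a finite abelian `p`-group `M`
with nontrivial norm (`M^ν ≠ 1`), `#M^G = p`, and `n` least with `ker((1-σ)^n) = M`:
if `n = p` then `M ≅ (ℤ/pℤ)^p` or `M ≅ ℤ/p²ℤ ⊕ (ℤ/pℤ)^{p-2}`. -/
theorem stmt13 {M : Type*} [AddCommGroup M] [Finite M] (p : ℕ) (hp : p.Prime)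
    (σ : AddAut M) (hσ : p • σ = 0)
    (hpgrp : ∀ x : M, ∃ j : ℕ, p ^ j • x = 0)
    (hν : ∃ x : M, ∑ i ∈ Finset.range p, (i • σ) x ≠ 0)
    (hM1 : Nat.card (AddMonoidHom.ker (oneSubSigma σ)) = p)
    (n : ℕ) (hn : AddMonoidHom.ker ((oneSubSigma σ) ^ n) = ⊤)
    (hmin : ∀ m < n, AddMonoidHom.ker ((oneSubSigma σ) ^ m) ≠ ⊤)
    (hnp : n = p) :
    Nonempty (M ≃+ (Fin p → ZMod p)) ∨
      Nonempty (M ≃+ (ZMod (p ^ 2) × (Fin (p - 2) → ZMod p))) :=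
  stmt13_general p hp σ hσ hM1 n hn hmin hnp
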